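/- arXiv:1702.00671 — 2 statements merged into one kernel-verified Lean document; each statement's English description precedes it below -/
import Mathlib

section
/- Under the stated hypotheses, with m := max(0, deg p − deg q + 1), for every k with m < k ≤ N−1 there exist complex numbers a_{1,k}, …, a_{m₂,k} such that A·v_k − V_{k−m}·V_{k−m}^*·G·F^*·v_k = Σ_{ℓ=1}^{m₂} a_{ℓ,k}·w_{k−m−1}(z_ℓ) + Σ_{j=k−m+1}^{k+1} h_{j,k}·v_j, where the coefficients h_{j,k} are the corresponding entries of the Hessenberg matrix H_N. -/
/-!
Write `M = A - G Fᴴ`. The hypothesis on `Aᴴ` gives `Mᴴ = p(A) q(A)⁻¹`, and dividing `p` by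
`∏ (X - z_ℓ)` and interpolating the remainder at the `z_ℓ` turns this into
`a⁻¹ s(A) + Σ γ_ℓ (A - z_ℓ)⁻¹` with `deg s < m`. For `j ≤ k - m`, the term `s(A) v_j` lies in the
Krylov space spanned by `v_1, …, v_{k-1}`, which is orthogonal to `v_k`; so the coefficients
`⟨v_j, M v_k⟩` only see the resolvents, and the projection of `M v_k` onto `K_{k-m}` is a
combination of the projections of `y_ℓ = (A - z_ℓ)^{-*} v_k`. Since
`⟨(A - z_ℓ) x, y_ℓ⟩ = ⟨x, v_k⟩ = 0` for `x ∈ K_{k-m-1}`, that projection is an element of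
`K_{k-m} = span{b} + (A - z_ℓ) K_{k-m-1}` orthogonal to `(A - z_ℓ) K_{k-m-1}`, and the only such
vectors are the multiples of the GMRES residual `r_{k-m-1}(z_ℓ)`. The remaining coefficients of
`A v_k` are its Arnoldi coefficients `h_{j,k}`, `j > k - m`.
-/

open Polynomial Matrix Finset

/-- The standard inner product `x^* y` on `ℂ^n` (conjugate-linear in the first slot). -/
noncomputable def inn {n : ℕ} (x y : Fin n → ℂ) : ℂ := ∑ i, (starRingEnd ℂ) (x i) * y i

noncomputable def nrm {n : ℕ} (x : Fin n → ℂ) : ℝ := Real.sqrt (inn x x).re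

/-- `σ_k(δ) = sqrt(Σ_{j=0}^k |q_j(δ)|²)`. -/
noncomputable def sigmaP (q : ℕ → Polynomial ℂ) (δ : ℂ) (k : ℕ) : ℝ :=
  Real.sqrt (∑ j ∈ Finset.range (k + 1), ‖(q j).eval δ‖ ^ 2)

section InnerProduct

variable {n : ℕ}

theorem inn_eq_star_dotProduct (x y : Fin n → ℂ) : inn x y = star x ⬝ᵥ y := rfl

theorem inn_add_right (x y y' : Fin n → ℂ) : inn x (y + y') = inn x y + inn x y' := by
  simp only [inn_eq_star_dotProduct, dotProduct_add]

theorem inn_sub_right (x y y' : Fin n → ℂ) : inn x (y - y') = inn x y - inn x y' := by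
  simp only [inn_eq_star_dotProduct, dotProduct_sub]

theorem inn_smul_right (c : ℂ) (x y : Fin n → ℂ) : inn x (c • y) = c * inn x y := by
  simp only [inn_eq_star_dotProduct, dotProduct_smul, smul_eq_mul]

theorem inn_sum_right {ι : Type*} (s : Finset ι) (x : Fin n → ℂ) (f : ι → Fin n → ℂ) :
    inn x (∑ i ∈ s, f i) = ∑ i ∈ s, inn x (f i) := by
  simp only [inn_eq_star_dotProduct, dotProduct_sum]

theorem inn_add_left (x x' y : Fin n → ℂ) : inn (x + x') y = inn x y + inn x' y := by
  simp only [inn_eq_star_dotProduct, star_add, add_dotProduct]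

theorem inn_smul_left (c : ℂ) (x y : Fin n → ℂ) : inn (c • x) y = starRingEnd ℂ c * inn x y := by
  simp only [inn_eq_star_dotProduct, star_smul, smul_dotProduct, smul_eq_mul]; rfl

theorem inn_sum_left {ι : Type*} (s : Finset ι) (f : ι → Fin n → ℂ) (y : Fin n → ℂ) :
    inn (∑ i ∈ s, f i) y = ∑ i ∈ s, inn (f i) y := by
  simp only [inn_eq_star_dotProduct, star_sum, sum_dotProduct]

theorem inn_mulVec_left (M : Matrix (Fin n) (Fin n) ℂ) (x y : Fin n → ℂ) :
    inn (M *ᵥ x) y = inn x (Mᴴ *ᵥ y) := by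
  simp only [inn_eq_star_dotProduct, star_mulVec, dotProduct_mulVec]

theorem inn_mulVec_right (M : Matrix (Fin n) (Fin n) ℂ) (x y : Fin n → ℂ) :
    inn x (M *ᵥ y) = inn (Mᴴ *ᵥ x) y := by
  rw [inn_mulVec_left, conjTranspose_conjTranspose]

open scoped ComplexOrder in
theorem inn_self_eq_zero {x : Fin n → ℂ} : inn x x = 0 ↔ x = 0 :=
  dotProduct_star_self_eq_zero

open scoped ComplexOrder in
theorem eq_zero_of_nrm_eq_zero {x : Fin n → ℂ} (h : nrm x = 0) : x = 0 := by
  have hre : (inn x x).re ≤ 0 := Real.sqrt_eq_zero'.mp h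
  have hnonneg : 0 ≤ inn x x := dotProduct_star_self_nonneg x
  have hle : inn x x ≤ 0 := Complex.le_def.mpr ⟨hre, (Complex.le_def.mp hnonneg).2.symm⟩
  exact inn_self_eq_zero.mp (le_antisymm hle hnonneg)

theorem nrm_smul_inv_nrm_smul (x : Fin n → ℂ) :
    ((nrm x : ℝ) : ℂ) • (((nrm x)⁻¹ : ℝ) : ℂ) • x = x := by
  rcases eq_or_ne (nrm x) 0 with hx | hx
  · simp [eq_zero_of_nrm_eq_zero hx]
  · rw [smul_smul, ← Complex.ofReal_mul, mul_inv_cancel₀ hx, Complex.ofReal_one, one_smul]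

theorem inn_eq_zero_of_mem_span {s : Set (Fin n → ℂ)} {y : Fin n → ℂ}
    (h : ∀ x ∈ s, inn x y = 0) : ∀ x ∈ Submodule.span ℂ s, inn x y = 0 := by
  intro x hx
  induction hx using Submodule.span_induction with
  | mem x hx => exact h x hx
  | zero => simp [inn]
  | add x x' _ _ hx hx' => rw [inn_add_left, hx, hx', add_zero]
  | smul c x _ hx => rw [inn_smul_left, hx, mul_zero]

theorem exists_eq_smul_sub_of_mem_sup {S : Submodule ℂ (Fin n → ℂ)} {b u x : Fin n → ℂ}
    (hx : x ∈ (ℂ ∙ b) ⊔ S) (hxS : ∀ s ∈ S, inn s x = 0) (hu : u ∈ S)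
    (hbu : ∀ s ∈ S, inn s (b - u) = 0) : ∃ g : ℂ, x = g • (b - u) := by
  obtain ⟨y, hy, s, hs, rfl⟩ := Submodule.mem_sup.mp hx
  obtain ⟨g, rfl⟩ := Submodule.mem_span_singleton.mp hy
  refine ⟨g, ?_⟩
  have hD : g • b + s - g • (b - u) ∈ S := by
    rw [smul_sub, add_sub_sub_cancel, add_comm]
    exact S.add_mem (S.smul_mem g hu) hs
  rw [← sub_eq_zero, ← inn_self_eq_zero, inn_sub_right, hxS _ hD, inn_smul_right, hbu _ hD,
    mul_zero, sub_zero]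

end InnerProduct

section SpanBelow

variable {n : ℕ}

/-- With `v` the Arnoldi basis, `spanBelow v t` is the Krylov space `K_t(A, b)` and
`spanBelow (fun j => (A - δ • 1) *ᵥ v j) t` is `(A - δ) K_t(A, b)`. -/
def spanBelow (f : ℕ → Fin n → ℂ) (t : ℕ) : Submodule ℂ (Fin n → ℂ) :=
  Submodule.span ℂ {x | ∃ j < t, x = f j}

variable {f : ℕ → Fin n → ℂ} {s t : ℕ}

theorem mem_spanBelow {j : ℕ} (hj : j < t) : f j ∈ spanBelow f t :=
  Submodule.subset_span ⟨j, hj, rfl⟩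

theorem spanBelow_le {S : Submodule ℂ (Fin n → ℂ)} (h : ∀ j < t, f j ∈ S) : spanBelow f t ≤ S :=
  Submodule.span_le.mpr fun _ ⟨j, hj, hx⟩ => hx ▸ h j hj

theorem spanBelow_mono (hst : s ≤ t) : spanBelow f s ≤ spanBelow f t :=
  spanBelow_le fun _ hj => mem_spanBelow (hj.trans_le hst)

theorem sum_smul_mem_spanBelow (c : ℕ → ℂ) : ∑ j ∈ range t, c j • f j ∈ spanBelow f t :=
  Submodule.sum_mem _ fun _ hj => Submodule.smul_mem _ _ (mem_spanBelow (mem_range.mp hj))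

end SpanBelow

section Orthonormal

variable {n N : ℕ} {v : ℕ → Fin n → ℂ}

theorem inn_sum_smul_of_orthonormal
    (horth : ∀ i j : ℕ, i < N → j < N → inn (v i) (v j) = if i = j then 1 else 0)
    {t i : ℕ} (ht : t ≤ N) (hi : i < t) (c : ℕ → ℂ) :
    inn (v i) (∑ j ∈ range t, c j • v j) = c i := by
  rw [inn_sum_right, Finset.sum_eq_single_of_mem i (mem_range.mpr hi)]
  · rw [inn_smul_right, horth i i (by omega) (by omega), if_pos rfl, mul_one]
  · intro j hj hji
    rw [inn_smul_right, horth i j (by omega) (by have := mem_range.mp hj; omega),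
      if_neg (Ne.symm hji), mul_zero]

theorem inn_eq_zero_of_mem_spanBelow
    (horth : ∀ i j : ℕ, i < N → j < N → inn (v i) (v j) = if i = j then 1 else 0)
    {t i : ℕ} {x : Fin n → ℂ} (hx : x ∈ spanBelow v t) (hti : t ≤ i) (hi : i < N) :
    inn x (v i) = 0 := by
  refine inn_eq_zero_of_mem_span (fun y hy => ?_) x hx
  obtain ⟨j, hj, rfl⟩ := hy
  rw [horth j i (by omega) hi, if_neg (by omega)]

noncomputable def orthProj (v : ℕ → Fin n → ℂ) (t : ℕ) : (Fin n → ℂ) →ₗ[ℂ] Fin n → ℂ where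
  toFun y := ∑ j ∈ range t, inn (v j) y • v j
  map_add' y y' := by simp only [inn_add_right, add_smul, sum_add_distrib]
  map_smul' c y := by simp only [inn_smul_right, mul_smul, smul_sum, RingHom.id_apply]

theorem orthProj_apply (t : ℕ) (y : Fin n → ℂ) :
    orthProj v t y = ∑ j ∈ range t, inn (v j) y • v j := rfl

theorem orthProj_mem_spanBelow (t : ℕ) (y : Fin n → ℂ) : orthProj v t y ∈ spanBelow v t :=
  sum_smul_mem_spanBelow _

theorem orthProj_congr {t : ℕ} {y y' : Fin n → ℂ} (h : ∀ j < t, inn (v j) y = inn (v j) y') :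
    orthProj v t y = orthProj v t y' := by
  simp only [orthProj_apply]
  exact sum_congr rfl fun j hj => by rw [h j (mem_range.mp hj)]

theorem inn_orthProj
    (horth : ∀ i j : ℕ, i < N → j < N → inn (v i) (v j) = if i = j then 1 else 0)
    {t : ℕ} (ht : t ≤ N) {x : Fin n → ℂ} (hx : x ∈ spanBelow v t) (y : Fin n → ℂ) :
    inn x (orthProj v t y) = inn x y := by
  rw [← sub_eq_zero, ← inn_sub_right]
  refine inn_eq_zero_of_mem_span (fun x' hx' => ?_) x hx
  obtain ⟨j, hj, rfl⟩ := hx'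
  rw [inn_sub_right, orthProj_apply, inn_sum_smul_of_orthonormal horth ht hj, sub_self]

theorem sum_range_add_eq_orthProj_add
    (horth : ∀ i j : ℕ, i < N → j < N → inn (v i) (v j) = if i = j then 1 else 0)
    {t d : ℕ} (htd : t + d ≤ N) (c : ℕ → ℂ) :
    ∑ j ∈ range (t + d), c j • v j =
      orthProj v t (∑ j ∈ range (t + d), c j • v j) + ∑ i ∈ range d, c (t + i) • v (t + i) := by
  conv_lhs => rw [sum_range_add]
  rw [orthProj_apply]
  congr 1
  exact sum_congr rfl fun j hj => by
    rw [inn_sum_smul_of_orthonormal horth htd (by have := mem_range.mp hj; omega)]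

end Orthonormal

section Arnoldi

variable {n N : ℕ} {A : Matrix (Fin n) (Fin n) ℂ} {v : ℕ → Fin n → ℂ} {h : ℕ → ℕ → ℂ}

theorem mulVec_mem_spanBelow_succ
    (harn : ∀ k, k + 1 < N → A *ᵥ v k = ∑ j ∈ range (k + 2), h j k • v j)
    {t : ℕ} (ht : t + 1 ≤ N) {x : Fin n → ℂ} (hx : x ∈ spanBelow v t) :
    A *ᵥ x ∈ spanBelow v (t + 1) := by
  have hle : spanBelow v t ≤ (spanBelow v (t + 1)).comap A.mulVecLin := spanBelow_le fun j hj => by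
    rw [Submodule.mem_comap, Matrix.mulVecLin_apply, harn j (by omega)]
    exact spanBelow_mono (by omega) (sum_smul_mem_spanBelow _)
  exact hle hx

theorem pow_mulVec_mem_spanBelow
    (harn : ∀ k, k + 1 < N → A *ᵥ v k = ∑ j ∈ range (k + 2), h j k • v j) (i : ℕ) :
    ∀ j, j + i < N → (A ^ i) *ᵥ v j ∈ spanBelow v (j + i + 1) := by
  induction i with
  | zero => exact fun j _ => by simpa using mem_spanBelow (Nat.lt_succ_self j)
  | succ i ih =>
    intro j hj
    rw [pow_succ', ← mulVec_mulVec]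
    exact mulVec_mem_spanBelow_succ harn (by omega) (ih j (by omega))

theorem aeval_mulVec_mem_spanBelow
    (harn : ∀ k, k + 1 < N → A *ᵥ v k = ∑ j ∈ range (k + 2), h j k • v j)
    {f : ℂ[X]} {d j : ℕ} (hf : f.degree < d) (hjd : j + d ≤ N) :
    aeval A f *ᵥ v j ∈ spanBelow v (j + d) := by
  rcases eq_or_ne f 0 with rfl | hf0
  · simp
  rw [aeval_eq_sum_range' ((natDegree_lt_iff_degree_lt hf0).mpr hf), sum_mulVec]
  refine Submodule.sum_mem _ fun i hi => ?_
  have hid := mem_range.mp hi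
  rw [smul_mulVec]
  exact Submodule.smul_mem _ _
    (spanBelow_mono (by omega) (pow_mulVec_mem_spanBelow harn i j (by omega)))

theorem spanBelow_shift_le
    (harn : ∀ k, k + 1 < N → A *ᵥ v k = ∑ j ∈ range (k + 2), h j k • v j)
    (δ : ℂ) {s : ℕ} (hs : s + 1 ≤ N) :
    spanBelow (fun j => (A - δ • 1) *ᵥ v j) s ≤ spanBelow v (s + 1) := spanBelow_le fun j hj => by
  rw [sub_mulVec, smul_mulVec, one_mulVec]
  refine Submodule.sub_mem _ ?_ (Submodule.smul_mem _ _ (mem_spanBelow (by omega)))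
  exact spanBelow_mono (by omega)
    (mulVec_mem_spanBelow_succ harn (by omega) (mem_spanBelow j.lt_succ_self))

theorem spanBelow_le_sup_shift {b : Fin n → ℂ} (hv0 : v 0 ∈ ℂ ∙ b)
    (harn : ∀ k, k + 1 < N → A *ᵥ v k = ∑ j ∈ range (k + 2), h j k • v j)
    (hsub : ∀ k, k + 1 < N → h (k + 1) k ≠ 0) (δ : ℂ) (s : ℕ) (hs : s + 1 ≤ N) :
    spanBelow v (s + 1) ≤ (ℂ ∙ b) ⊔ spanBelow (fun j => (A - δ • 1) *ᵥ v j) s := by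
  induction s with
  | zero =>
    refine spanBelow_le fun j hj => ?_
    obtain rfl : j = 0 := by omega
    exact Submodule.mem_sup_left hv0
  | succ s ih =>
    set T := (ℂ ∙ b) ⊔ spanBelow (fun j => (A - δ • 1) *ᵥ v j) (s + 1)
    have hprev : spanBelow v (s + 1) ≤ T :=
      (ih (by omega)).trans (sup_le_sup_left (spanBelow_mono s.le_succ) _)
    have hv : v (s + 1) =
        (h (s + 1) s)⁻¹ • ((A - δ • 1) *ᵥ v s + δ • v s - ∑ i ∈ range (s + 1), h i s • v i) := by
      rw [sub_mulVec, smul_mulVec, one_mulVec, sub_add_cancel, harn s (by omega),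
        sum_range_succ, add_sub_cancel_left, smul_smul, inv_mul_cancel₀ (hsub s (by omega)),
        one_smul]
    refine spanBelow_le fun j hj => ?_
    rcases Nat.lt_succ_iff_lt_or_eq.mp hj with hj | rfl
    · exact hprev (mem_spanBelow hj)
    rw [hv]
    refine T.smul_mem _ (T.sub_mem (T.add_mem ?_ ?_) (hprev (sum_smul_mem_spanBelow _)))
    · exact Submodule.mem_sup_right (mem_spanBelow s.lt_succ_self)
    · exact T.smul_mem _ (hprev (mem_spanBelow s.lt_succ_self))

theorem exists_orthProj_eq_smul_residual
    (horth : ∀ i j : ℕ, i < N → j < N → inn (v i) (v j) = if i = j then 1 else 0)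
    {b : Fin n → ℂ} (hv0 : v 0 ∈ ℂ ∙ b)
    (harn : ∀ k, k + 1 < N → A *ᵥ v k = ∑ j ∈ range (k + 2), h j k • v j)
    (hsub : ∀ k, k + 1 < N → h (k + 1) k ≠ 0) {δ : ℂ} {s : ℕ} (hs : s + 1 ≤ N)
    {u : Fin n → ℂ} (hu : u ∈ spanBelow (fun j => (A - δ • 1) *ᵥ v j) s)
    (hperp : ∀ x ∈ spanBelow (fun j => (A - δ • 1) *ᵥ v j) s, inn x (b - u) = 0)
    {y : Fin n → ℂ} (hy : ∀ i < s, inn ((A - δ • 1) *ᵥ v i) y = 0) :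
    ∃ g : ℂ, orthProj v (s + 1) y = g • (b - u) := by
  refine exists_eq_smul_sub_of_mem_sup
    (spanBelow_le_sup_shift hv0 harn hsub δ s hs (orthProj_mem_spanBelow _ _))
    (fun x hx => ?_) hu hperp
  rw [inn_orthProj horth hs (spanBelow_shift_le harn δ hs hx)]
  refine inn_eq_zero_of_mem_span (fun x' hx' => ?_) x hx
  obtain ⟨i, hi, rfl⟩ := hx'
  exact hy i hi

end Arnoldi

section PartialFractions

open Lagrange

theorem degree_divByMonic_lt_of_natDegree_lt {R : Type*} [Ring R] [Nontrivial R] {p q : R[X]}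
    (hq : q.Monic) {d : ℕ} (h : p.natDegree < d + q.natDegree) : (p /ₘ q).degree < d := by
  rcases lt_or_ge p.natDegree q.natDegree with hlt | hle
  · rw [(divByMonic_eq_zero_iff hq).mpr (degree_lt_degree hlt), degree_zero]
    exact WithBot.bot_lt_coe d
  · refine degree_le_natDegree.trans_lt ?_
    rw [natDegree_divByMonic p hq]
    exact_mod_cast (by omega : p.natDegree - q.natDegree < d)

variable {K ι : Type*} [Field K] [Fintype ι] [DecidableEq ι]

theorem exists_eq_nodal_mul_divByMonic_add_sum (p : K[X]) {z : ι → K}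
    (hz : Function.Injective z) :
    ∃ e : ι → K,
      p = nodal univ z * (p /ₘ nodal univ z) + ∑ ℓ, C (e ℓ) * nodal (univ.erase ℓ) z := by
  set q := nodal univ z
  refine ⟨fun ℓ => nodalWeight univ z ℓ * (p %ₘ q).eval (z ℓ), ?_⟩
  have hdeg : (p %ₘ q).degree < #(univ : Finset ι) :=
    (degree_modByMonic_lt p nodal_monic).trans_eq degree_nodal
  have hrem : p %ₘ q = ∑ ℓ, C (nodalWeight univ z ℓ * (p %ₘ q).eval (z ℓ)) *
      nodal (univ.erase ℓ) z := by
    conv_lhs => rw [eq_interpolate hz.injOn hdeg, interpolate_eq_nodalWeight_mul_nodal_div_X_sub_C]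
    refine sum_congr rfl fun ℓ _ => ?_
    rw [← nodal_erase_eq_nodal_div (mem_univ ℓ), C_mul]
    ring
  rw [← hrem, add_comm]
  exact (modByMonic_add_div p q).symm

theorem exists_aeval_mul_inv_eq_divByMonic_add_sum_smul_inv {κ : Type*} [Fintype κ]
    [DecidableEq κ] (A : Matrix κ κ K) (p : K[X]) {z : ι → K} (hz : Function.Injective z) {a : K} (ha : a ≠ 0)
    (hqA : IsUnit (aeval A (C a * ∏ ℓ, (X - C (z ℓ)))))
    (hzA : ∀ ℓ, IsUnit (A - z ℓ • 1)) :
    ∃ γ : ι → K, aeval A p * (aeval A (C a * ∏ ℓ, (X - C (z ℓ))))⁻¹ =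
      a⁻¹ • aeval A (p /ₘ ∏ ℓ, (X - C (z ℓ))) + ∑ ℓ, γ ℓ • (A - z ℓ • 1)⁻¹ := by
  obtain ⟨e, he⟩ := exists_eq_nodal_mul_divByMonic_add_sum p hz
  simp only [← nodal_eq] at hqA ⊢
  refine ⟨fun ℓ => a⁻¹ * e ℓ, ?_⟩
  have hQ : aeval A (C a * nodal univ z) = a • aeval A (nodal univ z) := by
    rw [map_mul, aeval_C, ← Algebra.smul_def]
  have hfactor (ℓ : ι) :
      (A - z ℓ • 1)⁻¹ * aeval A (nodal univ z) = aeval A (nodal (univ.erase ℓ) z) := by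
    rw [nodal_eq_mul_nodal_erase (mem_univ ℓ), map_mul, ← mul_assoc, map_sub, aeval_X, aeval_C,
      Algebra.algebraMap_eq_smul_one, nonsing_inv_mul _ ((isUnit_iff_isUnit_det _).mp (hzA ℓ)),
      one_mul]
  suffices h : (a⁻¹ • aeval A (p /ₘ nodal univ z) + ∑ ℓ, (a⁻¹ * e ℓ) • (A - z ℓ • 1)⁻¹) *
      aeval A (C a * nodal univ z) = aeval A p by
    rw [← h]
    exact mul_nonsing_inv_cancel_right _ _ ((isUnit_iff_isUnit_det _).mp hqA)
  rw [hQ, add_mul, sum_mul]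
  simp only [smul_mul_smul_comm, inv_mul_cancel₀ ha, one_smul, mul_comm a⁻¹, mul_assoc, mul_one,
    hfactor]
  conv_rhs => rw [he]
  rw [← map_mul, mul_comm, map_add, map_sum]
  congr 1
  refine sum_congr rfl fun ℓ _ => ?_
  rw [map_mul, aeval_C, Algebra.smul_def]

end PartialFractions

theorem exists_orthProj_mulVec_eq_sum_smul_residual {n N m₂ m₃ : ℕ}
    {A : Matrix (Fin n) (Fin n) ℂ} {v : ℕ → Fin n → ℂ} {h : ℕ → ℕ → ℂ} {b : Fin n → ℂ}
    (horth : ∀ i j : ℕ, i < N → j < N → inn (v i) (v j) = if i = j then 1 else 0)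
    (hv0 : v 0 ∈ ℂ ∙ b)
    (harn : ∀ k, k + 1 < N → A *ᵥ v k = ∑ j ∈ range (k + 2), h j k • v j)
    (hsub : ∀ k, k + 1 < N → h (k + 1) k ≠ 0)
    (F G : Matrix (Fin n) (Fin m₃) ℂ) (p : ℂ[X]) {z : Fin m₂ → ℂ} (hz : Function.Injective z)
    {a : ℂ} (ha : a ≠ 0) (hqA : IsUnit (aeval A (C a * ∏ ℓ, (X - C (z ℓ)))))
    (hzA : ∀ ℓ, IsUnit (A - z ℓ • 1))
    (hbml : Aᴴ = aeval A p * (aeval A (C a * ∏ ℓ, (X - C (z ℓ))))⁻¹ + F * Gᴴ)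
    {m s : ℕ} (hdeg : p.natDegree < m + m₂) (hsm : s + m < N) {u : ℂ → Fin n → ℂ}
    (hu : ∀ δ, u δ ∈ spanBelow (fun j => (A - δ • 1) *ᵥ v j) s)
    (hperp : ∀ δ, ∀ x ∈ spanBelow (fun j => (A - δ • 1) *ᵥ v j) s, inn x (b - u δ) = 0) :
    ∃ c : Fin m₂ → ℂ,
      orthProj v (s + 1) ((A - G * Fᴴ) *ᵥ v (s + m)) = ∑ ℓ, c ℓ • (b - u (z ℓ)) := by
  obtain ⟨γ, hγ⟩ := exists_aeval_mul_inv_eq_divByMonic_add_sum_smul_inv A p hz ha hqA hzA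
  have hdiv : (p /ₘ ∏ ℓ, (X - C (z ℓ))).degree < m := by
    refine degree_divByMonic_lt_of_natDegree_lt Lagrange.nodal_monic ?_
    rwa [Lagrange.natDegree_nodal, card_univ, Fintype.card_fin]
  have hadj : (A - G * Fᴴ)ᴴ =
      a⁻¹ • aeval A (p /ₘ ∏ ℓ, (X - C (z ℓ))) + ∑ ℓ, γ ℓ • (A - z ℓ • 1)⁻¹ := by
    rw [conjTranspose_sub, conjTranspose_mul, conjTranspose_conjTranspose, hbml,
      add_sub_cancel_right, hγ]
  set y : Fin m₂ → Fin n → ℂ := fun ℓ => ((A - z ℓ • 1)⁻¹)ᴴ *ᵥ v (s + m)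
  have hcoef : ∀ j < s + 1, inn (v j) ((A - G * Fᴴ) *ᵥ v (s + m)) =
      inn (v j) (∑ ℓ, starRingEnd ℂ (γ ℓ) • y ℓ) := by
    intro j hj
    have hpoly := aeval_mulVec_mem_spanBelow harn hdiv (j := j) (by omega)
    rw [inn_mulVec_right, hadj, add_mulVec, inn_add_left, smul_mulVec, inn_smul_left,
      inn_eq_zero_of_mem_spanBelow horth hpoly (by omega) hsm, mul_zero, zero_add, sum_mulVec,
      inn_sum_left, inn_sum_right]
    refine sum_congr rfl fun ℓ _ => ?_
    rw [smul_mulVec, inn_smul_left, inn_mulVec_left, inn_smul_right]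
  have hres (ℓ : Fin m₂) : ∃ g : ℂ, orthProj v (s + 1) (y ℓ) = g • (b - u (z ℓ)) := by
    refine exists_orthProj_eq_smul_residual horth hv0 harn hsub (by omega) (hu _) (hperp _)
      fun i hi => ?_
    rw [inn_mulVec_left, mulVec_mulVec, ← conjTranspose_mul,
      nonsing_inv_mul _ ((isUnit_iff_isUnit_det _).mp (hzA ℓ)), conjTranspose_one, one_mulVec,
      horth i (s + m) (by omega) hsm, if_neg (by omega)]
  choose g hg using hres
  refine ⟨fun ℓ => starRingEnd ℂ (γ ℓ) * g ℓ, ?_⟩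
  rw [orthProj_congr hcoef, map_sum]
  simp only [map_smul, hg, smul_smul]

noncomputable def hessCoeff {N : ℕ} (H : Matrix (Fin N) (Fin N) ℂ) (i j : ℕ) : ℂ :=
  if hij : i < N ∧ j < N then H ⟨i, hij.1⟩ ⟨j, hij.2⟩ else 0

theorem hessCoeff_of_lt {N : ℕ} (H : Matrix (Fin N) (Fin N) ℂ) {i j : ℕ} (hi : i < N)
    (hj : j < N) : hessCoeff H i j = H ⟨i, hi⟩ ⟨j, hj⟩ :=
  dif_pos ⟨hi, hj⟩

theorem mulVec_eq_sum_hessCoeff {n N : ℕ} {A : Matrix (Fin n) (Fin n) ℂ} {v : ℕ → Fin n → ℂ}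
    {H : Matrix (Fin N) (Fin N) ℂ}
    (harn : ∀ (k : ℕ) (hk : k + 1 < N), A *ᵥ v k = ∑ j : Fin (k + 2),
      H ⟨j, Nat.lt_of_le_of_lt (Nat.lt_succ_iff.mp j.isLt) hk⟩ ⟨k, Nat.lt_of_succ_lt hk⟩ • v j)
    (k : ℕ) (hk : k + 1 < N) : A *ᵥ v k = ∑ j ∈ range (k + 2), hessCoeff H j k • v j := by
  rw [harn k hk, ← Fin.sum_univ_eq_sum_range (fun j => hessCoeff H j k • v j)]
  exact sum_congr rfl fun j _ => congrArg (· • v j) (hessCoeff_of_lt H _ _).symm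

theorem hessCoeff_succ_ne_zero {N : ℕ} {H : Matrix (Fin N) (Fin N) ℂ}
    (hpos : ∀ (k : ℕ) (hk : k + 1 < N), 0 < (H ⟨k + 1, hk⟩ ⟨k, Nat.lt_of_succ_lt hk⟩).re)
    (k : ℕ) (hk : k + 1 < N) : hessCoeff H (k + 1) k ≠ 0 := by
  rw [hessCoeff_of_lt H hk (by omega)]
  exact fun h0 => (hpos k hk).ne' (by rw [h0, Complex.zero_re])

/-- Indices are `0`-based: the paper's `v_k` is `v (k - 1)` and `h_{j,k}` is `H (j - 1) (k - 1)`. -/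
theorem stmt16 (n N m₂ m₃ : ℕ)
    (A : Matrix (Fin n) (Fin n) ℂ) (b : Fin n → ℂ)
    (v : ℕ → Fin n → ℂ)
    (horth : ∀ i j : ℕ, i < N → j < N → inn (v i) (v j) = if i = j then 1 else 0)
    (hv1 : v 0 = (((nrm b)⁻¹ : ℝ) : ℂ) • b)
    (H : Matrix (Fin N) (Fin N) ℂ)
    (hsub : ∀ (k : ℕ) (hk : k + 1 < N),
      0 < (H ⟨k + 1, hk⟩ ⟨k, Nat.lt_of_succ_lt hk⟩).re ∧
        (H ⟨k + 1, hk⟩ ⟨k, Nat.lt_of_succ_lt hk⟩).im = 0)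
    (harn : ∀ (k : ℕ) (hk : k + 1 < N),
      A.mulVec (v k) = ∑ j : Fin (k + 2),
        H ⟨(j : ℕ), Nat.lt_of_le_of_lt (Nat.lt_succ_iff.mp j.isLt) hk⟩
          ⟨k, Nat.lt_of_succ_lt hk⟩ • v (j : ℕ))
    (F G : Matrix (Fin n) (Fin m₃) ℂ)
    (p qq : Polynomial ℂ) (hqA : IsUnit (Polynomial.aeval A qq))
    (z : Fin m₂ → ℂ) (hzinj : Function.Injective z) (a : ℂ) (ha : a ≠ 0)
    (hqfact : qq = Polynomial.C a * ∏ ℓ : Fin m₂, (Polynomial.X - Polynomial.C (z ℓ)))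
    (hzA : ∀ ℓ : Fin m₂, IsUnit (A - z ℓ • 1))
    (hbml : Aᴴ = (Polynomial.aeval A p) * (Polynomial.aeval A qq)⁻¹ + F * Gᴴ)
    (m : ℕ) (hm : (m : ℤ) = max 0 ((p.natDegree : ℤ) - (qq.natDegree : ℤ) + 1))
    (u : ℂ → ℕ → Fin n → ℂ)
    (humem : ∀ (δ : ℂ) (k : ℕ), k < N →
      u δ k ∈ Submodule.span ℂ {x : Fin n → ℂ | ∃ j < k, x = (A - δ • 1).mulVec (v j)})
    (huperp : ∀ (δ : ℂ) (k : ℕ), k < N →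
      ∀ y ∈ Submodule.span ℂ {x : Fin n → ℂ | ∃ j < k, x = (A - δ • 1).mulVec (v j)},
        inn y (b - u δ k) = 0)
    (r : ℂ → ℕ → Fin n → ℂ) (hr : ∀ δ k, r δ k = b - u δ k)
    (w : ℂ → ℕ → Fin n → ℂ) (hw : ∀ δ k, w δ k = (((nrm (r δ k))⁻¹ : ℝ) : ℂ) • r δ k)
 :
    ∀ (k : ℕ) (hmk : m < k) (hkN1 : k ≤ N - 1),
      ∃ c : Fin m₂ → ℂ,
        A.mulVec (v (k - 1)) -
            ∑ i ∈ Finset.range (k - m),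
              inn (v i) (G.mulVec (Fᴴ.mulVec (v (k - 1)))) • v i =
          (∑ ℓ : Fin m₂, c ℓ • w (z ℓ) (k - m - 1)) +
            ∑ t : Fin (m + 1),
              H ⟨k - m + (t : ℕ), by have := t.isLt; omega⟩
                  ⟨k - 1, by omega⟩ • v (k - m + (t : ℕ)) := by
  intro k hmk hkN1
  subst hqfact
  have harn' := mulVec_eq_sum_hessCoeff harn
  have hqdeg : (C a * ∏ ℓ, (X - C (z ℓ))).natDegree = m₂ := by
    rw [natDegree_C_mul ha, ← Lagrange.nodal_eq, Lagrange.natDegree_nodal, card_univ,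
      Fintype.card_fin]
  obtain ⟨s, rfl⟩ : ∃ s, k = s + m + 1 := ⟨k - m - 1, by omega⟩
  obtain ⟨c, hc⟩ := exists_orthProj_mulVec_eq_sum_smul_residual horth
    (hv1 ▸ Submodule.smul_mem _ _ (Submodule.mem_span_singleton_self b)) harn'
    (hessCoeff_succ_ne_zero fun k hk => (hsub k hk).1) F G p hzinj ha hqA hzA hbml (m := m)
    (s := s) (by rw [hqdeg] at hm; omega) (by omega)
    (fun δ => humem δ s (by omega)) (fun δ => huperp δ s (by omega))
  have hAv : A *ᵥ v (s + m) = orthProj v (s + 1) (A *ᵥ v (s + m)) +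
      ∑ t ∈ range (m + 1), hessCoeff H (s + 1 + t) (s + m) • v (s + 1 + t) := by
    rw [harn' (s + m) (by omega), show s + m + 2 = s + 1 + (m + 1) by omega]
    exact sum_range_add_eq_orthProj_add horth (by omega) _
  have hres (ℓ : Fin m₂) : b - u (z ℓ) s = (nrm (r (z ℓ) s) : ℂ) • w (z ℓ) s := by
    rw [hw, ← hr, nrm_smul_inv_nrm_smul]
  refine ⟨fun ℓ => c ℓ * nrm (r (z ℓ) s), ?_⟩
  simp only [show s + m + 1 - m = s + 1 by omega, show s + m + 1 - 1 = s + m by omega,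
    Nat.add_sub_cancel, ← hessCoeff_of_lt H,
    Fin.sum_univ_eq_sum_range (fun t => hessCoeff H (s + 1 + t) (s + m) • v (s + 1 + t))]
  rw [hAv, ← orthProj_apply, add_sub_right_comm, ← map_sub, mulVec_mulVec, ← sub_mulVec, hc]
  simp only [hres, smul_smul]
end

section
/- Assume additionally that A is unitary. For 0 ≤ k ≤ N−1 let q_k^* denote the reversed polynomial of q_k: if q_k(z) = Σ_{j=0}^{k} a_j z^j then q_k^*(z) = Σ_{j=0}^{k} conj(a_{k−j}) z^j. Then σ_k(0)·q_k^*(z) = Σ_{j=0}^{k} conj(q_j(0))·q_j(z) for all z ∈ ℂ, and consequently the normalized GMRES residual at δ = 0 satisfies w_k(0) = q_k^*(A)·v_1. -/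
open Polynomial Matrix Finset

/-- The reversed polynomial of `P` with respect to formal degree `k`:
`Σ_{j=0}^k conj(coeff_{k-j} P) X^j`. -/
noncomputable def revPoly (P : Polynomial ℂ) (k : ℕ) : Polynomial ℂ :=
  ∑ j ∈ Finset.range (k + 1),
    Polynomial.C ((starRingEnd ℂ) (P.coeff (k - j))) * Polynomial.X ^ j

open scoped InnerProductSpace ComplexOrder

/-!
For unitary `A` the form `⟨p, r⟩ = ⟪p(A) v₁, r(A) v₁⟫` on polynomials is invariant under
multiplication by `X`, and the Arnoldi relations make `q₀, …, q_{N-1}` orthonormal for it, with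
`q_j(A) v₁ = v_{j+1}` and positive leading coefficients `t_j`. Invariance turns reversal into
`⟨X^m, q_k^*⟩ = ⟨q_k, X^(k-m)⟩`, so on polynomials `p` of degree `≤ k` we get
`⟨p, q_k^*⟩ = conj (p 0) / t_k`; expanding `q_k^*` in the orthonormal basis `q₀, …, q_k` gives
`t_k q_k^* = Σ_j conj (q_j 0) q_j`, and evaluating at `0` gives `t_k = σ_k(0)`.
The GMRES residual is `p(A) v₁` for a `p` of degree `≤ k` orthogonal to `X·q_j`, `j < k`; the same
expansion (with `q_j - q_j(0) ∈ X·𝒫_{j-1}`) shows that `p` is a positive multiple of `q_k^*`.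
-/

section DegreeLT

variable {R : Type*}

theorem mem_degreeLT_iff_coeff_eq_zero [Semiring R] {n : ℕ} {p : R[X]} :
    p ∈ R[X]_n ↔ ∀ i ≥ n, p.coeff i = 0 := by
  rw [mem_degreeLT, degree_lt_iff_coeff_zero]

theorem mem_degreeLT_succ_iff [Semiring R] {k : ℕ} {p : R[X]} :
    p ∈ R[X]_(k + 1) ↔ p.natDegree ≤ k := by
  rw [degreeLT_succ_eq_degreeLE, mem_degreeLE, natDegree_le_iff_degree_le]

theorem X_mul_mem_degreeLT [Semiring R] {m : ℕ} {p : R[X]} (hp : p ∈ R[X]_m) :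
    X * p ∈ R[X]_(m + 1) := by
  rw [mem_degreeLT_iff_coeff_eq_zero] at hp ⊢
  rintro (_ | i) hi
  · omega
  · rw [coeff_X_mul, hp i (by omega)]

theorem divX_mem_degreeLT [Semiring R] {k : ℕ} {p : R[X]} (hp : p ∈ R[X]_(k + 1)) :
    p.divX ∈ R[X]_k := by
  rw [mem_degreeLT_iff_coeff_eq_zero] at hp ⊢
  intro i hi
  rw [coeff_divX, hp (i + 1) (by omega)]

theorem sub_C_mul_X_pow_mem_degreeLT [Ring R] {k : ℕ} {p : R[X]} (hp : p ∈ R[X]_(k + 1)) :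
    p - C (p.coeff k) * X ^ k ∈ R[X]_k := by
  rw [mem_degreeLT_iff_coeff_eq_zero] at hp ⊢
  intro i hi
  rw [coeff_sub, coeff_C_mul_X_pow]
  rcases hi.eq_or_lt with rfl | hlt
  · simp
  · rw [if_neg hlt.ne', hp i hlt, sub_zero]

end DegreeLT

theorem revPoly_mem_degreeLT (P : ℂ[X]) (k : ℕ) : revPoly P k ∈ ℂ[X]_(k + 1) :=
  Submodule.sum_mem _ fun j hj => by
    rw [← smul_eq_C_mul]
    exact Submodule.smul_mem _ _ (mem_degreeLT.2 ((degree_X_pow_le j).trans_lt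
      (by exact_mod_cast Finset.mem_range.1 hj)))

theorem revPoly_eval_zero (P : ℂ[X]) (k : ℕ) :
    (revPoly P k).eval 0 = (starRingEnd ℂ) (P.coeff k) := by
  rw [revPoly, eval_finsetSum, Finset.sum_eq_single 0 (fun j _ hj => by simp [hj]) (by simp)]
  simp

section ShiftInvariant

variable {E : Type*} [NormedAddCommGroup E] [InnerProductSpace ℂ E]

def ShiftInvariant (ev : ℂ[X] →ₗ[ℂ] E) : Prop :=
  ∀ p r : ℂ[X], ⟪ev (X * p), ev (X * r)⟫_ℂ = ⟪ev p, ev r⟫_ℂ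

variable {ev : ℂ[X] →ₗ[ℂ] E} {q : ℕ → ℂ[X]} {k : ℕ}

theorem degreeLT_eq_span_of_orthonormal {m : ℕ} (hq : ∀ j < m, q j ∈ ℂ[X]_(j + 1))
    (ho : Orthonormal ℂ fun j : Fin m => ev (q j)) :
    ℂ[X]_m = Submodule.span ℂ (Set.range fun j : Fin m => q j) := by
  have hli : LinearIndependent ℂ fun j : Fin m => q j := ho.linearIndependent.of_comp ev
  refine (Submodule.eq_of_le_of_finrank_eq ?_ ?_).symm
  · rw [Submodule.span_le]
    rintro _ ⟨j, rfl⟩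
    exact degreeLT_mono j.isLt (hq j j.isLt)
  · rw [finrank_span_eq_card hli, (degreeLTEquiv ℂ m).finrank_eq, Module.finrank_fin_fun,
      Fintype.card_fin]

theorem eq_sum_inner_smul_of_mem_degreeLT {m : ℕ} (hq : ∀ j < m, q j ∈ ℂ[X]_(j + 1))
    (ho : Orthonormal ℂ fun j : Fin m => ev (q j)) {p : ℂ[X]} (hp : p ∈ ℂ[X]_m) :
    p = ∑ j : Fin m, ⟪ev (q j), ev p⟫_ℂ • q j := by
  rw [degreeLT_eq_span_of_orthonormal hq ho, Submodule.mem_span_range_iff_exists_fun] at hp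
  obtain ⟨c, rfl⟩ := hp
  simp only [map_sum, map_smul, ho.inner_right_fintype]

theorem inner_eq_zero_of_mem_degreeLT (hq : ∀ j ≤ k, q j ∈ ℂ[X]_(j + 1))
    (ho : Orthonormal ℂ fun j : Fin (k + 1) => ev (q j)) {s : ℂ[X]} (hs : s ∈ ℂ[X]_k) :
    ⟪ev s, ev (q k)⟫_ℂ = 0 := by
  have ho' : Orthonormal ℂ fun j : Fin k => ev (q j) :=
    ho.comp _ (Fin.castSucc_injective k)
  rw [eq_sum_inner_smul_of_mem_degreeLT (fun j hj => hq j hj.le) ho' hs, map_sum, sum_inner]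
  refine Finset.sum_eq_zero fun j _ => ?_
  rw [map_smul, inner_smul_left, mul_eq_zero]
  right
  simpa using ho.2 (Fin.castSucc_lt_last j).ne

theorem inner_X_pow_mul (hshift : ShiftInvariant ev) (l : ℕ) (p r : ℂ[X]) :
    ⟪ev (X ^ l * p), ev (X ^ l * r)⟫_ℂ = ⟪ev p, ev r⟫_ℂ := by
  induction l with
  | zero => simp
  | succ l ih => rw [pow_succ', mul_assoc, mul_assoc, hshift _ _, ih]

theorem inner_X_pow_X_pow_reflect (hshift : ShiftInvariant ev) {j m : ℕ} (hj : j ≤ k) (hm : m ≤ k) :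
    ⟪ev (X ^ m), ev (X ^ j)⟫_ℂ = ⟪ev (X ^ (k - j)), ev (X ^ (k - m))⟫_ℂ := by
  rw [← inner_X_pow_mul hshift k, ← inner_X_pow_mul hshift (m + j) (X ^ (k - j)), ← pow_add,
    ← pow_add, ← pow_add, ← pow_add, show m + j + (k - j) = k + m by omega,
    show m + j + (k - m) = k + j by omega]

theorem inner_X_pow_revPoly (hshift : ShiftInvariant ev) {P : ℂ[X]} {m : ℕ}
    (hP : P.natDegree ≤ k) (hm : m ≤ k) :
    ⟪ev (X ^ m), ev (revPoly P k)⟫_ℂ = ⟪ev P, ev (X ^ (k - m))⟫_ℂ := by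
  conv_rhs => rw [as_sum_range' P (k + 1) (Nat.lt_succ_of_le hP)]
  rw [revPoly, map_sum, inner_sum, map_sum, sum_inner,
    ← Finset.sum_range_reflect _ (k + 1)]
  refine Finset.sum_congr rfl fun j hj => ?_
  have hjk : j ≤ k := Nat.lt_succ_iff.1 (Finset.mem_range.1 hj)
  rw [show k + 1 - 1 - j = k - j by omega, Nat.sub_sub_self hjk, ← smul_eq_C_mul, map_smul,
    inner_smul_right, ← C_mul_X_pow_eq_monomial, ← smul_eq_C_mul, map_smul, inner_smul_left,
    inner_X_pow_X_pow_reflect hshift (Nat.sub_le k j) hm, Nat.sub_sub_self hjk]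

theorem coeff_mul_inner_X_pow (hq : ∀ j ≤ k, q j ∈ ℂ[X]_(j + 1))
    (ho : Orthonormal ℂ fun j : Fin (k + 1) => ev (q j)) :
    (q k).coeff k * ⟪ev (q k), ev (X ^ k)⟫_ℂ = 1 := by
  have hself : ⟪ev (q k), ev (q k)⟫_ℂ = 1 := by
    simpa using (orthonormal_iff_ite.1 ho) (Fin.last k) (Fin.last k)
  have hlow := inner_eq_zero_of_mem_degreeLT hq ho (sub_C_mul_X_pow_mem_degreeLT (hq k le_rfl))
  rw [← hself, ← inner_smul_right, ← map_smul, smul_eq_C_mul, eq_comm, ← sub_eq_zero,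
    ← inner_sub_right, ← map_sub]
  exact inner_eq_zero_symm.1 hlow

theorem inner_revPoly (hshift : ShiftInvariant ev)
    (hq : ∀ j ≤ k, q j ∈ ℂ[X]_(j + 1)) (ho : Orthonormal ℂ fun j : Fin (k + 1) => ev (q j))
    {s : ℂ[X]} (hs : s ∈ ℂ[X]_(k + 1)) :
    ⟪ev s, ev (revPoly (q k) k)⟫_ℂ = ((q k).coeff k)⁻¹ * (starRingEnd ℂ) (s.eval 0) := by
  have hX : ∀ m ≤ k, ⟪ev (X ^ m), ev (revPoly (q k) k)⟫_ℂ =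
      if m = 0 then ((q k).coeff k)⁻¹ else 0 := by
    intro m hm
    rw [inner_X_pow_revPoly hshift (mem_degreeLT_succ_iff.1 (hq k le_rfl)) hm]
    split_ifs with h
    · rw [h, Nat.sub_zero]
      exact eq_inv_of_mul_eq_one_right (coeff_mul_inner_X_pow hq ho)
    · refine inner_eq_zero_symm.1 (inner_eq_zero_of_mem_degreeLT hq ho (mem_degreeLT.2 ?_))
      rw [degree_X_pow]
      exact_mod_cast (by omega : k - m < k)
  conv_lhs => rw [as_sum_range' s (k + 1) (Nat.lt_succ_of_le (mem_degreeLT_succ_iff.1 hs))]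
  rw [map_sum, sum_inner, Finset.sum_eq_single 0]
  · rw [← C_mul_X_pow_eq_monomial, ← smul_eq_C_mul, map_smul, inner_smul_left, hX 0 k.zero_le,
      if_pos rfl, coeff_zero_eq_eval_zero, mul_comm]
  · intro m hm hm0
    rw [← C_mul_X_pow_eq_monomial, ← smul_eq_C_mul, map_smul, inner_smul_left,
      hX m (Nat.lt_succ_iff.1 (Finset.mem_range.1 hm)), if_neg hm0, mul_zero]
  · simp

theorem C_coeff_mul_revPoly (hshift : ShiftInvariant ev)
    (hq : ∀ j ≤ k, q j ∈ ℂ[X]_(j + 1)) (ho : Orthonormal ℂ fun j : Fin (k + 1) => ev (q j)) :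
    C ((q k).coeff k) * revPoly (q k) k =
      ∑ j ∈ Finset.range (k + 1), C ((starRingEnd ℂ) ((q j).eval 0)) * q j := by
  have ha : (q k).coeff k ≠ 0 := left_ne_zero_of_mul_eq_one (coeff_mul_inner_X_pow hq ho)
  rw [eq_sum_inner_smul_of_mem_degreeLT (fun j hj => hq j (Nat.lt_succ_iff.1 hj)) ho
      (revPoly_mem_degreeLT _ _), Finset.mul_sum,
    ← Fin.sum_univ_eq_sum_range (fun j => C ((starRingEnd ℂ) ((q j).eval 0)) * q j)]
  refine Finset.sum_congr rfl fun j _ => ?_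
  rw [inner_revPoly hshift hq ho (degreeLT_mono (by omega) (hq j (by omega))), smul_eq_C_mul,
    ← mul_assoc, ← C_mul, mul_inv_cancel_left₀ ha]

theorem norm_revPoly (hshift : ShiftInvariant ev)
    (hq : ∀ j ≤ k, q j ∈ ℂ[X]_(j + 1)) (ho : Orthonormal ℂ fun j : Fin (k + 1) => ev (q j)) :
    ‖ev (revPoly (q k) k)‖ = 1 := by
  have ha : (q k).coeff k ≠ 0 := left_ne_zero_of_mul_eq_one (coeff_mul_inner_X_pow hq ho)
  have h := inner_revPoly hshift hq ho (revPoly_mem_degreeLT (q k) k)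
  rw [revPoly_eval_zero, Complex.conj_conj, inv_mul_cancel₀ ha] at h
  rw [norm_eq_sqrt_re_inner (𝕜 := ℂ), h, RCLike.one_re, Real.sqrt_one]

theorem eq_inner_one_smul_of_inner_X_mul_eq_zero (hq : ∀ j ≤ k, q j ∈ ℂ[X]_(j + 1))
    (ho : Orthonormal ℂ fun j : Fin (k + 1) => ev (q j)) {p : ℂ[X]} (hp : p ∈ ℂ[X]_(k + 1))
    (hperp : ∀ s ∈ ℂ[X]_k, ⟪ev (X * s), ev p⟫_ℂ = 0) :
    p = ⟪ev 1, ev p⟫_ℂ • ∑ j ∈ Finset.range (k + 1), C ((starRingEnd ℂ) ((q j).eval 0)) * q j := by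
  conv_lhs =>
    rw [eq_sum_inner_smul_of_mem_degreeLT (fun j hj => hq j (Nat.lt_succ_iff.1 hj)) ho hp]
  rw [Finset.smul_sum, ← Fin.sum_univ_eq_sum_range
    (fun j => ⟪ev 1, ev p⟫_ℂ • (C ((starRingEnd ℂ) ((q j).eval 0)) * q j))]
  refine Finset.sum_congr rfl fun j _ => ?_
  have hj : (j : ℕ) ≤ k := Nat.lt_succ_iff.1 j.isLt
  have hcoef : ⟪ev (q j), ev p⟫_ℂ = (starRingEnd ℂ) ((q j).eval 0) * ⟪ev 1, ev p⟫_ℂ := by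
    conv_lhs => rw [← X_mul_divX_add (q j), coeff_zero_eq_eval_zero]
    rw [map_add, inner_add_left,
      hperp _ (degreeLT_mono hj (divX_mem_degreeLT (hq j hj))), zero_add, ← mul_one (C _),
      ← smul_eq_C_mul, map_smul, inner_smul_left]
  rw [hcoef, ← smul_eq_C_mul, smul_smul, mul_comm]

theorem inv_norm_smul_eq_revPoly (hshift : ShiftInvariant ev)
    (hq : ∀ j ≤ k, q j ∈ ℂ[X]_(j + 1)) (ho : Orthonormal ℂ fun j : Fin (k + 1) => ev (q j))
    (hlead : 0 < (q k).coeff k) {p : ℂ[X]} (hp : p ∈ ℂ[X]_(k + 1))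
    (hperp : ∀ s ∈ ℂ[X]_k, ⟪ev (X * s), ev p⟫_ℂ = 0) (hpos : 0 < ⟪ev 1, ev p⟫_ℂ) :
    (‖ev p‖⁻¹ : ℂ) • ev p = ev (revPoly (q k) k) := by
  set c := ⟪ev 1, ev p⟫_ℂ * (q k).coeff k
  have hc : 0 < c := mul_pos hpos hlead
  have hevp : ev p = c • ev (revPoly (q k) k) := by
    conv_lhs => rw [eq_inner_one_smul_of_inner_X_mul_eq_zero hq ho hp hperp,
      ← C_coeff_mul_revPoly hshift hq ho, ← smul_eq_C_mul, smul_smul, map_smul]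
  have hnorm : (‖ev p‖ : ℂ) = c := by
    rw [hevp, norm_smul, norm_revPoly hshift hq ho, mul_one]
    exact RCLike.norm_of_nonneg' hc.le
  rw [hnorm, hevp, smul_smul, inv_mul_cancel₀ hc.ne', one_smul]

end ShiftInvariant

theorem inner_pos_of_inner_sub_eq_zero {E : Type*} [NormedAddCommGroup E]
    [InnerProductSpace ℂ E] {x b u : E} {β : ℝ} (hβ : 0 < β) (hb : b = (β : ℂ) • x)
    (hu : ⟪u, b - u⟫_ℂ = 0) (hr : b - u ≠ 0) : 0 < ⟪x, b - u⟫_ℂ := by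
  have h : (β : ℂ) * ⟪x, b - u⟫_ℂ = ((‖b - u‖ ^ 2 : ℝ) : ℂ) := by
    rw [← Complex.conj_ofReal β, ← inner_smul_left, ← hb, ← sub_zero ⟪b, b - u⟫_ℂ, ← hu,
      ← inner_sub_left, inner_self_eq_norm_sq_to_K]
    norm_cast
  have hx : ⟪x, b - u⟫_ℂ = ((β⁻¹ * ‖b - u‖ ^ 2 : ℝ) : ℂ) := by
    rw [Complex.ofReal_mul, ← h, Complex.ofReal_inv,
      inv_mul_cancel_left₀ (Complex.ofReal_ne_zero.2 hβ.ne')]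
  rw [hx]
  exact_mod_cast mul_pos (inv_pos.2 hβ) (pow_pos (norm_pos_iff.2 hr) 2)

theorem sigmaP_eq_coeff {q : ℕ → ℂ[X]} {k : ℕ} (hlead : 0 < (q k).coeff k)
    (hK : C ((q k).coeff k) * revPoly (q k) k =
      ∑ j ∈ Finset.range (k + 1), C ((starRingEnd ℂ) ((q j).eval 0)) * q j) :
    (sigmaP q 0 k : ℂ) = (q k).coeff k := by
  have h := congrArg (eval 0) hK
  simp only [eval_mul, eval_C, revPoly_eval_zero, eval_finsetSum] at h
  have hsq : ‖(q k).coeff k‖ ^ 2 = ∑ j ∈ Finset.range (k + 1), ‖(q j).eval 0‖ ^ 2 := by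
    apply Complex.ofReal_injective
    push_cast
    rw [← Complex.mul_conj', h]
    exact Finset.sum_congr rfl fun j _ => Complex.conj_mul' _
  rw [sigmaP, ← hsq, Real.sqrt_sq (norm_nonneg _)]
  exact RCLike.norm_of_nonneg' hlead.le

section MatrixPolynomial

variable {n : ℕ}

noncomputable def aevalMulVec (A : Matrix (Fin n) (Fin n) ℂ) (x : Fin n → ℂ) :
    ℂ[X] →ₗ[ℂ] Fin n → ℂ where
  toFun p := aeval A p *ᵥ x
  map_add' p r := by rw [map_add, add_mulVec]
  map_smul' c p := by rw [map_smul, smul_mulVec, RingHom.id_apply]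

theorem aevalMulVec_apply (A : Matrix (Fin n) (Fin n) ℂ) (x : Fin n → ℂ) (p : ℂ[X]) :
    aevalMulVec A x p = aeval A p *ᵥ x := rfl

@[simp]
theorem aevalMulVec_one (A : Matrix (Fin n) (Fin n) ℂ) (x : Fin n → ℂ) :
    aevalMulVec A x 1 = x := by
  simp [aevalMulVec_apply]

theorem aevalMulVec_X_mul (A : Matrix (Fin n) (Fin n) ℂ) (x : Fin n → ℂ) (p : ℂ[X]) :
    aevalMulVec A x (X * p) = A *ᵥ aevalMulVec A x p := by
  simp [aevalMulVec_apply, mulVec_mulVec]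

theorem inn_eq_inner (x y : Fin n → ℂ) : inn x y = ⟪WithLp.toLp 2 x, WithLp.toLp 2 y⟫_ℂ := by
  simp only [inn, EuclideanSpace.inner_toLp_toLp, dotProduct, Pi.star_apply, RCLike.star_def,
    mul_comm]

theorem nrm_eq_norm (x : Fin n → ℂ) : nrm x = ‖WithLp.toLp 2 x‖ := by
  rw [nrm, inn_eq_inner, norm_eq_sqrt_re_inner (𝕜 := ℂ)]
  rfl

theorem inner_mulVec_mulVec {A : Matrix (Fin n) (Fin n) ℂ} (hA : Aᴴ * A = 1)
    (x y : Fin n → ℂ) :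
    ⟪WithLp.toLp 2 (A *ᵥ x), WithLp.toLp 2 (A *ᵥ y)⟫_ℂ =
      ⟪WithLp.toLp 2 x, WithLp.toLp 2 y⟫_ℂ := by
  rw [EuclideanSpace.inner_toLp_toLp, EuclideanSpace.inner_toLp_toLp, dotProduct_comm,
    star_mulVec, ← dotProduct_mulVec, mulVec_mulVec, hA, one_mulVec, dotProduct_comm]

noncomputable def aevalMulVecL2 (A : Matrix (Fin n) (Fin n) ℂ) (x : Fin n → ℂ) :
    ℂ[X] →ₗ[ℂ] EuclideanSpace ℂ (Fin n) :=
  (WithLp.linearEquiv 2 ℂ (Fin n → ℂ)).symm.toLinearMap ∘ₗ aevalMulVec A x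

theorem inner_aevalMulVecL2 (A : Matrix (Fin n) (Fin n) ℂ) (x : Fin n → ℂ) (p r : ℂ[X]) :
    ⟪aevalMulVecL2 A x p, aevalMulVecL2 A x r⟫_ℂ = inn (aevalMulVec A x p) (aevalMulVec A x r) :=
  (inn_eq_inner _ _).symm

theorem shiftInvariant_aevalMulVecL2 {A : Matrix (Fin n) (Fin n) ℂ} (hA : Aᴴ * A = 1)
    (x : Fin n → ℂ) : ShiftInvariant (aevalMulVecL2 A x) := by
  intro p r
  rw [inner_aevalMulVecL2, inner_aevalMulVecL2, aevalMulVec_X_mul, aevalMulVec_X_mul,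
    inn_eq_inner, inn_eq_inner, inner_mulVec_mulVec hA]

theorem orthonormal_aevalMulVecL2 {A : Matrix (Fin n) (Fin n) ℂ} {v : ℕ → Fin n → ℂ}
    {q : ℕ → ℂ[X]} {m : ℕ} (hqv : ∀ j < m, aevalMulVec A (v 0) (q j) = v j)
    (horth : ∀ i j : ℕ, i < m → j < m → inn (v i) (v j) = if i = j then 1 else 0) :
    Orthonormal ℂ fun j : Fin m => aevalMulVecL2 A (v 0) (q j) := by
  rw [orthonormal_iff_ite]
  intro i j
  rw [inner_aevalMulVecL2, hqv i i.isLt, hqv j j.isLt, horth i j i.isLt j.isLt]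
  simp only [Fin.val_eq_val]

end MatrixPolynomial

section Arnoldi

variable {n N : ℕ} {A : Matrix (Fin n) (Fin n) ℂ} {v : ℕ → Fin n → ℂ}
  {H : Matrix (Fin N) (Fin N) ℂ} {q : ℕ → ℂ[X]}

theorem mem_degreeLT_and_coeff_pos_of_recurrence (hq0 : q 0 = 1)
    (hsub : ∀ (k : ℕ) (hk : k + 1 < N), 0 < H ⟨k + 1, hk⟩ ⟨k, Nat.lt_of_succ_lt hk⟩)
    (hqrec : ∀ (k : ℕ) (hk : k + 1 < N),
      C (H ⟨k + 1, hk⟩ ⟨k, Nat.lt_of_succ_lt hk⟩) * q (k + 1) =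
        X * q k - ∑ j : Fin (k + 1),
          C (H ⟨(j : ℕ), Nat.lt_trans j.isLt hk⟩ ⟨k, Nat.lt_of_succ_lt hk⟩) * q (j : ℕ)) :
    ∀ j < N, q j ∈ ℂ[X]_(j + 1) ∧ 0 < (q j).coeff j := by
  intro j
  induction j using Nat.strong_induction_on with
  | _ j ih =>
    intro hj
    cases j with
    | zero => simp [hq0, mem_degreeLT_succ_iff]
    | succ m =>
      have hprev : ∀ i ≤ m, q i ∈ ℂ[X]_(i + 1) := fun i hi => (ih i (by omega) (by omega)).1
      have hh := hsub m hj
      have hsum : ∑ i : Fin (m + 1),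
          C (H ⟨(i : ℕ), Nat.lt_trans i.isLt hj⟩ ⟨m, Nat.lt_of_succ_lt hj⟩) * q (i : ℕ) ∈
            ℂ[X]_(m + 1) :=
        Submodule.sum_mem _ fun i _ => by
          rw [← smul_eq_C_mul]
          exact Submodule.smul_mem _ _ (degreeLT_mono (by omega) (hprev i (by omega)))
      constructor
      · have hmem : C (H ⟨m + 1, hj⟩ ⟨m, Nat.lt_of_succ_lt hj⟩) * q (m + 1) ∈ ℂ[X]_(m + 2) := by
          rw [hqrec m hj]
          exact sub_mem (X_mul_mem_degreeLT (hprev m le_rfl)) (degreeLT_mono (by omega) hsum)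
        rw [← smul_eq_C_mul] at hmem
        simpa [smul_smul, inv_mul_cancel₀ hh.ne'] using
          Submodule.smul_mem _ (H ⟨m + 1, hj⟩ ⟨m, Nat.lt_of_succ_lt hj⟩)⁻¹ hmem
      · have hc := congrArg (coeff · (m + 1)) (hqrec m hj)
        simp only [coeff_C_mul, coeff_sub, coeff_X_mul,
          mem_degreeLT_iff_coeff_eq_zero.1 hsum (m + 1) le_rfl, sub_zero] at hc
        rw [← eq_inv_mul_iff_mul_eq₀ hh.ne'] at hc
        rw [hc]
        exact mul_pos (RCLike.inv_pos_of_pos hh) (ih m (by omega) (by omega)).2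

theorem aevalMulVec_eq_of_arnoldi (hq0 : q 0 = 1)
    (hsub : ∀ (k : ℕ) (hk : k + 1 < N), H ⟨k + 1, hk⟩ ⟨k, Nat.lt_of_succ_lt hk⟩ ≠ 0)
    (harn : ∀ (k : ℕ) (hk : k + 1 < N),
      A *ᵥ v k = ∑ j : Fin (k + 2),
        H ⟨(j : ℕ), Nat.lt_of_le_of_lt (Nat.lt_succ_iff.mp j.isLt) hk⟩
          ⟨k, Nat.lt_of_succ_lt hk⟩ • v (j : ℕ))
    (hqrec : ∀ (k : ℕ) (hk : k + 1 < N),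
      C (H ⟨k + 1, hk⟩ ⟨k, Nat.lt_of_succ_lt hk⟩) * q (k + 1) =
        X * q k - ∑ j : Fin (k + 1),
          C (H ⟨(j : ℕ), Nat.lt_trans j.isLt hk⟩ ⟨k, Nat.lt_of_succ_lt hk⟩) * q (j : ℕ)) :
    ∀ j < N, aevalMulVec A (v 0) (q j) = v j := by
  intro j
  induction j using Nat.strong_induction_on with
  | _ j ih =>
    intro hj
    cases j with
    | zero => simp [hq0]
    | succ m =>
      have hrec := congrArg (aevalMulVec A (v 0)) (hqrec m hj)
      simp only [map_sub, map_sum, ← smul_eq_C_mul, map_smul, aevalMulVec_X_mul] at hrec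
      rw [ih m (by omega) (by omega),
        Finset.sum_congr rfl fun (i : Fin (m + 1)) _ => by rw [ih i (by omega) (by omega)]] at hrec
      apply smul_right_injective _ (hsub m hj)
      dsimp only
      rw [hrec, harn m hj, Fin.sum_univ_castSucc]
      simp

end Arnoldi

section Residual

variable {n : ℕ} {A : Matrix (Fin n) (Fin n) ℂ} {v : ℕ → Fin n → ℂ} {q : ℕ → ℂ[X]} {k : ℕ}

theorem span_mulVec_eq_map_degreeLT (hqv : ∀ j < k, aevalMulVec A (v 0) (q j) = v j)
    (hspan : ℂ[X]_k = Submodule.span ℂ (Set.range fun j : Fin k => q j)) :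
    Submodule.span ℂ {x | ∃ j < k, x = A *ᵥ v j} =
      (ℂ[X]_k).map (aevalMulVec A (v 0) ∘ₗ LinearMap.mulLeft ℂ X) := by
  rw [hspan, Submodule.map_span]
  congr 1
  ext x
  simp only [Set.mem_image, Set.mem_range, LinearMap.coe_comp,
    Function.comp_apply, LinearMap.mulLeft_apply, exists_exists_eq_and, aevalMulVec_X_mul]
  constructor
  · rintro ⟨j, hj, rfl⟩
    exact ⟨⟨j, hj⟩, by rw [hqv j hj]⟩
  · rintro ⟨j, rfl⟩
    exact ⟨j, j.isLt, by rw [hqv j j.isLt]⟩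

theorem exists_poly_eq_residual {b u : Fin n → ℂ}
    (hqv : ∀ j < k, aevalMulVec A (v 0) (q j) = v j)
    (hspan : ℂ[X]_k = Submodule.span ℂ (Set.range fun j : Fin k => q j))
    (hb0 : b ≠ 0) (hv0 : v 0 = (((nrm b)⁻¹ : ℝ) : ℂ) • b)
    (hu : u ∈ Submodule.span ℂ {x | ∃ j < k, x = A *ᵥ v j})
    (hperp : ∀ y ∈ Submodule.span ℂ {x | ∃ j < k, x = A *ᵥ v j}, inn y (b - u) = 0)
    (hr : b - u ≠ 0) :
    ∃ p ∈ ℂ[X]_(k + 1), aevalMulVec A (v 0) p = b - u ∧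
      (∀ s ∈ ℂ[X]_k, ⟪aevalMulVecL2 A (v 0) (X * s), aevalMulVecL2 A (v 0) p⟫_ℂ = 0) ∧
      0 < ⟪aevalMulVecL2 A (v 0) 1, aevalMulVecL2 A (v 0) p⟫_ℂ := by
  have hnrm : 0 < nrm b := by
    rw [nrm_eq_norm, norm_pos_iff]
    simpa using hb0
  have hb : b = (nrm b : ℂ) • v 0 := by
    rw [hv0, smul_smul, ← Complex.ofReal_mul, mul_inv_cancel₀ hnrm.ne', Complex.ofReal_one,
      one_smul]
  rw [span_mulVec_eq_map_degreeLT hqv hspan] at hu hperp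
  obtain ⟨s, hs, rfl⟩ := hu
  have hp : C (nrm b : ℂ) - X * s ∈ ℂ[X]_(k + 1) :=
    sub_mem (degreeLT_mono (by omega) (mem_degreeLT_succ_iff.2 (natDegree_C _).le))
      (X_mul_mem_degreeLT hs)
  have hpr : aevalMulVec A (v 0) (C (nrm b : ℂ) - X * s) =
      b - (aevalMulVec A (v 0) ∘ₗ LinearMap.mulLeft ℂ X) s := by
    rw [map_sub, ← mul_one (C _), ← smul_eq_C_mul, map_smul, aevalMulVec_one, ← hb]
    rfl
  refine ⟨_, hp, hpr, fun s' hs' => ?_, ?_⟩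
  · rw [inner_aevalMulVecL2, hpr]
    exact hperp _ (Submodule.mem_map_of_mem hs')
  · rw [inner_aevalMulVecL2, hpr, aevalMulVec_one, inn_eq_inner, WithLp.toLp_sub]
    refine inner_pos_of_inner_sub_eq_zero hnrm ?_ ?_ ?_
    · conv_lhs => rw [hb]
      rfl
    · rw [← WithLp.toLp_sub, ← inn_eq_inner]
      exact hperp _ (Submodule.mem_map_of_mem hs)
    · rwa [← WithLp.toLp_sub, Ne, WithLp.toLp_eq_zero]

end Residual

theorem stmt18_general (n N : ℕ)
    (A : Matrix (Fin n) (Fin n) ℂ) (b : Fin n → ℂ) (hb : b ≠ 0)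
    (v : ℕ → Fin n → ℂ)
    (horth : ∀ i j : ℕ, i < N → j < N → inn (v i) (v j) = if i = j then 1 else 0)
    (hv1 : v 0 = (((nrm b)⁻¹ : ℝ) : ℂ) • b)
    (H : Matrix (Fin N) (Fin N) ℂ)
    (hsub : ∀ (k : ℕ) (hk : k + 1 < N),
      0 < (H ⟨k + 1, hk⟩ ⟨k, Nat.lt_of_succ_lt hk⟩).re ∧
        (H ⟨k + 1, hk⟩ ⟨k, Nat.lt_of_succ_lt hk⟩).im = 0)
    (harn : ∀ (k : ℕ) (hk : k + 1 < N),
      A.mulVec (v k) = ∑ j : Fin (k + 2),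
        H ⟨(j : ℕ), Nat.lt_of_le_of_lt (Nat.lt_succ_iff.mp j.isLt) hk⟩
          ⟨k, Nat.lt_of_succ_lt hk⟩ • v (j : ℕ))
    (q : ℕ → Polynomial ℂ) (hq0 : q 0 = 1)
    (hqrec : ∀ (k : ℕ) (hk : k + 1 < N),
      Polynomial.C (H ⟨k + 1, hk⟩ ⟨k, Nat.lt_of_succ_lt hk⟩) * q (k + 1) =
        Polynomial.X * q k -
          ∑ j : Fin (k + 1),
            Polynomial.C (H ⟨(j : ℕ), Nat.lt_trans j.isLt hk⟩ ⟨k, Nat.lt_of_succ_lt hk⟩) *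
              q (j : ℕ))
    (u : ℂ → ℕ → Fin n → ℂ)
    (humem : ∀ (δ : ℂ) (k : ℕ), k < N →
      u δ k ∈ Submodule.span ℂ {x : Fin n → ℂ | ∃ j < k, x = (A - δ • 1).mulVec (v j)})
    (huperp : ∀ (δ : ℂ) (k : ℕ), k < N →
      ∀ y ∈ Submodule.span ℂ {x : Fin n → ℂ | ∃ j < k, x = (A - δ • 1).mulVec (v j)},
        inn y (b - u δ k) = 0)
    (r : ℂ → ℕ → Fin n → ℂ) (hr : ∀ δ k, r δ k = b - u δ k)
    (hrne : ∀ (δ : ℂ) (k : ℕ), k < N → r δ k ≠ 0)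
    (w : ℂ → ℕ → Fin n → ℂ) (hw : ∀ δ k, w δ k = (((nrm (r δ k))⁻¹ : ℝ) : ℂ) • r δ k)
    (hA : Aᴴ * A = 1) :
    ∀ (k : ℕ), k < N →
      (∀ zz : ℂ, ((sigmaP q 0 k : ℝ) : ℂ) * (revPoly (q k) k).eval zz =
        ∑ j ∈ Finset.range (k + 1),
          (starRingEnd ℂ) ((q j).eval 0) * (q j).eval zz) ∧
      w 0 k = (Polynomial.aeval A (revPoly (q k) k)).mulVec (v 0) := by
  intro k hk
  have hH : ∀ (m : ℕ) (hm : m + 1 < N), 0 < H ⟨m + 1, hm⟩ ⟨m, Nat.lt_of_succ_lt hm⟩ :=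
    fun m hm => Complex.pos_iff.2 ⟨(hsub m hm).1, (hsub m hm).2.symm⟩
  have hqv := aevalMulVec_eq_of_arnoldi hq0 (fun m hm => (hH m hm).ne') harn hqrec
  have hdeg := mem_degreeLT_and_coeff_pos_of_recurrence hq0 hH hqrec
  have hqk : ∀ j ≤ k, q j ∈ ℂ[X]_(j + 1) := fun j hj => (hdeg j (by omega)).1
  have ho : ∀ m ≤ N, Orthonormal ℂ fun j : Fin m => aevalMulVecL2 A (v 0) (q j) :=
    fun m hm => orthonormal_aevalMulVecL2 (fun j hj => hqv j (by omega))
      fun i j hi hj => horth i j (by omega) (by omega)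
  have hshift := shiftInvariant_aevalMulVecL2 hA (v 0)
  have hK := C_coeff_mul_revPoly hshift hqk (ho (k + 1) hk)
  refine ⟨fun z => ?_, ?_⟩
  · simpa [sigmaP_eq_coeff (hdeg k hk).2 hK, eval_finsetSum] using congrArg (eval z) hK
  · obtain ⟨p, hp, hpr, hperp, hpos⟩ := exists_poly_eq_residual (fun j hj => hqv j (by omega))
      (degreeLT_eq_span_of_orthonormal (fun j hj => hqk j hj.le) (ho k hk.le)) hb hv1
      (by simpa using humem 0 k hk) (by simpa using huperp 0 k hk) (hr 0 k ▸ hrne 0 k hk)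
    have hnormalize :=
      inv_norm_smul_eq_revPoly hshift hqk (ho (k + 1) hk) (hdeg k hk).2 hp hperp hpos
    rw [← hr 0 k] at hpr
    apply WithLp.toLp_injective 2
    rw [hw, WithLp.toLp_smul, nrm_eq_norm, Complex.ofReal_inv, ← hpr]
    exact hnormalize

/-- If `A` is unitary then, with `q_k^*` the reversed polynomial of
`q_k` (of formal degree `k`), one has `σ_k(0) q_k^*(z) = Σ_{j=0}^k conj(q_j(0)) q_j(z)` for
all `z`, and hence the normalized GMRES residual at `δ = 0` satisfies
`w_k(0) = q_k^*(A) v₁`. -/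
theorem stmt18 (n N : ℕ) (hN : 1 ≤ N) (hNn : N ≤ n)
    (A : Matrix (Fin n) (Fin n) ℂ) (b : Fin n → ℂ) (hb : b ≠ 0)
    (v : ℕ → Fin n → ℂ)
    (horth : ∀ i j : ℕ, i < N → j < N → inn (v i) (v j) = if i = j then 1 else 0)
    (hv1 : v 0 = (((nrm b)⁻¹ : ℝ) : ℂ) • b)
    (H : Matrix (Fin N) (Fin N) ℂ)
    (hHess : ∀ i j : Fin N, (j : ℕ) + 1 < (i : ℕ) → H i j = 0)
    (hsub : ∀ (k : ℕ) (hk : k + 1 < N),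
      0 < (H ⟨k + 1, hk⟩ ⟨k, Nat.lt_of_succ_lt hk⟩).re ∧
        (H ⟨k + 1, hk⟩ ⟨k, Nat.lt_of_succ_lt hk⟩).im = 0)
    (harn : ∀ (k : ℕ) (hk : k + 1 < N),
      A.mulVec (v k) = ∑ j : Fin (k + 2),
        H ⟨(j : ℕ), Nat.lt_of_le_of_lt (Nat.lt_succ_iff.mp j.isLt) hk⟩
          ⟨k, Nat.lt_of_succ_lt hk⟩ • v (j : ℕ))
    (harnN : A.mulVec (v (N - 1)) =
      ∑ j : Fin N, H j ⟨N - 1, Nat.sub_lt hN Nat.one_pos⟩ • v (j : ℕ))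
    (q : ℕ → Polynomial ℂ) (hq0 : q 0 = 1)
    (hqrec : ∀ (k : ℕ) (hk : k + 1 < N),
      Polynomial.C (H ⟨k + 1, hk⟩ ⟨k, Nat.lt_of_succ_lt hk⟩) * q (k + 1) =
        Polynomial.X * q k -
          ∑ j : Fin (k + 1),
            Polynomial.C (H ⟨(j : ℕ), Nat.lt_trans j.isLt hk⟩ ⟨k, Nat.lt_of_succ_lt hk⟩) *
              q (j : ℕ))
    (u : ℂ → ℕ → Fin n → ℂ)
    (humem : ∀ (δ : ℂ) (k : ℕ), k < N →
      u δ k ∈ Submodule.span ℂ {x : Fin n → ℂ | ∃ j < k, x = (A - δ • 1).mulVec (v j)})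
    (huperp : ∀ (δ : ℂ) (k : ℕ), k < N →
      ∀ y ∈ Submodule.span ℂ {x : Fin n → ℂ | ∃ j < k, x = (A - δ • 1).mulVec (v j)},
        inn y (b - u δ k) = 0)
    (r : ℂ → ℕ → Fin n → ℂ) (hr : ∀ δ k, r δ k = b - u δ k)
    (hrne : ∀ (δ : ℂ) (k : ℕ), k < N → r δ k ≠ 0)
    (w : ℂ → ℕ → Fin n → ℂ) (hw : ∀ δ k, w δ k = (((nrm (r δ k))⁻¹ : ℝ) : ℂ) • r δ k)
    (hA : Aᴴ * A = 1) :
    ∀ (k : ℕ), k < N →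
      (∀ zz : ℂ, ((sigmaP q 0 k : ℝ) : ℂ) * (revPoly (q k) k).eval zz =
        ∑ j ∈ Finset.range (k + 1),
          (starRingEnd ℂ) ((q j).eval 0) * (q j).eval zz) ∧
      w 0 k = (Polynomial.aeval A (revPoly (q k) k)).mulVec (v 0) :=
  stmt18_general n N A b hb v horth hv1 H hsub harn q hq0 hqrec u humem huperp r hr hrne w hw hA
end
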